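/- arXiv:1612.07776 — 2 statements merged into one kernel-verified Lean document; each statement's English description precedes it below -/
import Mathlib

section
/- Outside regime behaviour of the Dyson solution: assume the spectral radius of S equals 1 and fix τ^* > 1. There exist constants c, C > 0, depending only on s_*, s^* and τ^*, such that for all η ∈ (0,1], all τ ∈ [1, τ^*], every index i and a = 1, 2, the unique positive solution satisfies c·η/(τ − 1 + η^{2/3}) ≤ (v_a^τ(η))_i ≤ C·η/(τ − 1 + η^{2/3}). -/
open Matrix

/-- The spectral radius of a real matrix (as a real number), computed via the
complex spectrum. -/
noncomputable def specRad {n : ℕ} (S : Matrix (Fin n) (Fin n) ℝ) : ℝ :=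
  (spectralRadius ℂ (S.map (algebraMap ℝ ℂ))).toReal

/-- The Dyson equation together with positivity of the solution. -/
def IsDysonSolution {n : ℕ} (S : Matrix (Fin n) (Fin n) ℝ) (τ η : ℝ)
    (v₁ v₂ : Fin n → ℝ) : Prop :=
  (∀ i, 0 < v₁ i) ∧ (∀ i, 0 < v₂ i) ∧
  (∀ i, 1 / v₁ i = η + S.mulVec v₂ i + τ / (η + S.transpose.mulVec v₁ i)) ∧
  (∀ i, 1 / v₂ i = η + S.transpose.mulVec v₁ i + τ / (η + S.mulVec v₂ i))

/-!
Write `w₁ = η + Sᵀ v₁` and `w₂ = η + S v₂`, so that the equation reads `v₁ = w₁ / (w₁ w₂ + τ)` and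
`v₂ = w₂ / (w₁ w₂ + τ)`. Since `S` is entrywise positive with `ρ(S) = 1`, it has a positive
Perron vector `y = S y`, and pairing with it gives `⟨y, w₁ - v₁⟩ = η ⟨y, 1⟩`. The entries of `S`
are comparable, hence so are those of `w₁` and of `w₁ - v₁`, and therefore every entry of
`w₁ - v₁` is of order `η`; the same holds for `w₂ - v₂`, using the Perron vector of `Sᵀ`.
Entrywise, `a - a / (ab + τ) ≍ η` and `b - b / (ab + τ) ≍ η` force `a ≍ b`, `ab = O(1)` and
`a (a² + τ - 1) ≍ η`, whose solution is `a ≍ η / (τ - 1 + η^{2/3})`; finally `v₁ ≍ a`.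
-/

open Filter Topology

attribute [local instance] Matrix.linftyOpNormedRing Matrix.linftyOpNormedAlgebra

namespace Matrix

variable {n : ℕ} {S : Matrix (Fin n) (Fin n) ℝ}

theorem mulVec_mono_of_nonneg (hS : ∀ i j, 0 ≤ S i j) {u v : Fin n → ℝ} (h : u ≤ v) :
    S *ᵥ u ≤ S *ᵥ v := fun i =>
  dotProduct_le_dotProduct_of_nonneg_left h (hS i)

theorem mulVec_apply_pos (hS : ∀ i j, 0 < S i j) {x : Fin n → ℝ} (hx : 0 ≤ x) (hx0 : x ≠ 0)
    (i : Fin n) : 0 < (S *ᵥ x) i := by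
  obtain ⟨j, hj⟩ := Function.ne_iff.mp hx0
  calc 0 < S i j * x j := mul_pos (hS i j) ((hx j).lt_of_ne' hj)
    _ ≤ ∑ k, S i k * x k :=
      Finset.single_le_sum (fun k _ => mul_nonneg (hS i k).le (hx k)) (Finset.mem_univ j)

theorem mulVec_le_mul_mulVec {κ : ℝ} (hS : ∀ i j k, S i k ≤ κ * S j k) {v : Fin n → ℝ}
    (hv : 0 ≤ v) (i j : Fin n) : (S *ᵥ v) i ≤ κ * (S *ᵥ v) j := by
  simp only [mulVec, dotProduct, Finset.mul_sum, ← mul_assoc]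
  exact Finset.sum_le_sum fun k _ => mul_le_mul_of_nonneg_right (hS i j k) (hv k)

theorem add_mulVec_pos {η : ℝ} (hη : 0 < η) (hS : ∀ i j, 0 ≤ S i j) {v : Fin n → ℝ} (hv : 0 ≤ v)
    (i : Fin n) : 0 < η + (S *ᵥ v) i :=
  add_pos_of_pos_of_nonneg hη (dotProduct_nonneg_of_nonneg (hS i) hv)

theorem pow_smul_le_pow_mulVec (hS : ∀ i j, 0 ≤ S i j) {u : Fin n → ℝ} {θ : ℝ} (hθ : 0 ≤ θ)
    (h : θ • u ≤ S *ᵥ u) (k : ℕ) : θ ^ k • u ≤ (S ^ k) *ᵥ u := by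
  induction k with
  | zero => simp
  | succ k ih =>
    calc θ ^ (k + 1) • u = θ ^ k • (θ • u) := by rw [pow_succ, mul_smul]
      _ ≤ θ ^ k • (S *ᵥ u) := smul_le_smul_of_nonneg_left h (pow_nonneg hθ k)
      _ = S *ᵥ (θ ^ k • u) := by rw [mulVec_smul]
      _ ≤ S *ᵥ ((S ^ k) *ᵥ u) := mulVec_mono_of_nonneg hS ih
      _ = (S ^ (k + 1)) *ᵥ u := by rw [mulVec_mulVec, pow_succ']

theorem spectralRadius_ne_top (A : Matrix (Fin n) (Fin n) ℂ) : spectralRadius ℂ A ≠ ⊤ := by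
  refine ne_top_of_le_ne_top ?_ (spectrum.spectralRadius_le_pow_nnnorm_pow_one_div ℂ A 0)
  simp [ENNReal.mul_ne_top]

/-- By Gelfand's formula, `‖(S ^ k) u‖ ≥ θ ^ k u j` forces `ρ(S) ≥ θ`. -/
theorem le_specRad_of_smul_le_mulVec (hS : ∀ i j, 0 ≤ S i j) {u : Fin n → ℝ} (hu : 0 ≤ u)
    (hu0 : u ≠ 0) {θ : ℝ} (hθ : 0 ≤ θ) (h : θ • u ≤ S *ᵥ u) : θ ≤ specRad S := by
  set f : ℝ →+* ℂ := algebraMap ℝ ℂ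
  obtain ⟨j, hj⟩ : ∃ j, u j ≠ 0 := Function.ne_iff.mp hu0
  have huj : 0 < u j := (hu j).lt_of_ne' hj
  have hnorm_pos : 0 < ‖f ∘ u‖ :=
    lt_of_lt_of_le (by simpa [f] using hj) (norm_le_pi_norm (f ∘ u) j)
  set c := u j / ‖f ∘ u‖
  have hc : 0 < c := div_pos huj hnorm_pos
  have hgrowth : ∀ k : ℕ, θ ^ k * c ≤ ‖S.map f ^ k‖ := by
    intro k
    rw [mul_div_assoc', div_le_iff₀ hnorm_pos]
    calc θ ^ k * u j ≤ ((S ^ k) *ᵥ u) j := pow_smul_le_pow_mulVec hS hθ h k j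
      _ ≤ ‖f (((S ^ k) *ᵥ u) j)‖ := by simpa [f] using le_abs_self _
      _ ≤ ‖S.map f ^ k *ᵥ (f ∘ u)‖ := by
        rw [f.map_mulVec, ← f.mapMatrix_apply, map_pow, f.mapMatrix_apply]
        exact norm_le_pi_norm _ j
      _ ≤ ‖S.map f ^ k‖ * ‖f ∘ u‖ := linfty_opNorm_mulVec _ _
  have hlim : Tendsto (fun k : ℕ => ENNReal.ofReal (θ * c ^ (1 / k : ℝ))) atTop
      (𝓝 (ENNReal.ofReal θ)) := by
    have : Tendsto (fun k : ℕ => c ^ (1 / k : ℝ)) atTop (𝓝 1) := by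
      simpa [Function.comp_def] using (Real.continuousAt_const_rpow hc.ne').tendsto.comp
        tendsto_one_div_atTop_nhds_zero_nat
    simpa using ENNReal.tendsto_ofReal (this.const_mul θ)
  have hρ : ENNReal.ofReal θ ≤ spectralRadius ℂ (S.map f) := by
    refine le_of_tendsto_of_tendsto hlim
      (spectrum.pow_norm_pow_one_div_tendsto_nhds_spectralRadius _) ?_
    filter_upwards [eventually_ne_atTop 0] with k hk
    refine ENNReal.ofReal_le_ofReal ?_
    calc θ * c ^ (1 / k : ℝ) = (θ ^ k * c) ^ (1 / k : ℝ) := by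
          rw [Real.mul_rpow (by positivity) hc.le, one_div, Real.pow_rpow_inv_natCast hθ hk]
      _ ≤ ‖S.map f ^ k‖ ^ (1 / k : ℝ) :=
          Real.rpow_le_rpow (by positivity) (hgrowth k) (by positivity)
  exact (ENNReal.ofReal_le_iff_le_toReal (spectralRadius_ne_top _)).mp hρ

theorem exists_nonneg_specRad_smul_le_mulVec [Nonempty (Fin n)] (hS : ∀ i j, 0 ≤ S i j) :
    ∃ y : Fin n → ℝ, 0 ≤ y ∧ y ≠ 0 ∧ specRad S • y ≤ S *ᵥ y := by
  set f : ℝ →+* ℂ := algebraMap ℝ ℂ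
  obtain ⟨μ, hμ, hμρ⟩ := spectrum.exists_nnnorm_eq_spectralRadius (S.map f)
  rw [← spectrum_toLin', ← Module.End.hasEigenvalue_iff_mem_spectrum] at hμ
  obtain ⟨z, hz⟩ := hμ.exists_hasEigenvector
  have hSz : S.map f *ᵥ z = μ • z := by simpa using hz.apply_eq_smul
  have hμ_norm : ‖μ‖ = specRad S := by rw [specRad, ← hμρ]; simp
  refine ⟨fun i => ‖z i‖, fun i => norm_nonneg _, ?_, fun i => ?_⟩
  · simpa [funext_iff] using hz.2
  · calc specRad S * ‖z i‖ = ‖(S.map f *ᵥ z) i‖ := by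
          rw [hSz, Pi.smul_apply, smul_eq_mul, norm_mul, hμ_norm]
      _ ≤ ∑ j, ‖S.map f i j * z j‖ := norm_sum_le (f := fun j => S.map f i j * z j) _
      _ = (S *ᵥ fun i => ‖z i‖) i := by
          simp [mulVec, dotProduct, abs_of_nonneg (hS i _), f]

/-- If `y ≤ S y` were not an equality, positivity of `S` would give `θ • S y ≤ S (S y)` with
`θ > 1`, contradicting `ρ(S) = 1`. -/
theorem exists_pos_mulVec_eq_self [Nonempty (Fin n)] (hS : ∀ i j, 0 < S i j)
    (hρ : specRad S = 1) : ∃ y : Fin n → ℝ, (∀ i, 0 < y i) ∧ S *ᵥ y = y := by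
  have hS0 : ∀ i j, 0 ≤ S i j := fun i j => (hS i j).le
  obtain ⟨x, hx, hx0, hSx⟩ := exists_nonneg_specRad_smul_le_mulVec hS0
  rw [hρ, one_smul] at hSx
  have hy : ∀ i, 0 < (S *ᵥ x) i := mulVec_apply_pos hS hx hx0
  have hSy : S *ᵥ x ≤ S *ᵥ (S *ᵥ x) := mulVec_mono_of_nonneg hS0 hSx
  refine ⟨S *ᵥ x, hy, ?_⟩
  by_contra hne
  set y := S *ᵥ x
  set u := S *ᵥ y
  have hu : ∀ i, 0 < u i := fun i => (hy i).trans_le (hSy i)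
  have hgap : ∀ i, u i < (S *ᵥ u) i := fun i => by
    simpa [mulVec_sub] using mulVec_apply_pos hS (sub_nonneg.mpr hSy) (sub_ne_zero.mpr hne) i
  obtain ⟨i₀, hi₀⟩ := Finite.exists_min fun i => (S *ᵥ u) i / u i
  have hθ : 1 < (S *ᵥ u) i₀ / u i₀ := (one_lt_div (hu i₀)).mpr (hgap i₀)
  have hθu : ((S *ᵥ u) i₀ / u i₀) • u ≤ S *ᵥ u := fun i => (le_div_iff₀ (hu i)).mp (hi₀ i)
  have := le_specRad_of_smul_le_mulVec hS0 (fun i => (hu i).le)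
    (fun h => (hu i₀).ne' (congrFun h i₀)) (by linarith) hθu
  linarith

theorem specRad_transpose : specRad Sᵀ = specRad S := by
  have : spectrum ℂ (Sᵀ.map (algebraMap ℝ ℂ)) = spectrum ℂ (S.map (algebraMap ℝ ℂ)) := by
    ext μ
    rw [spectrum.mem_iff, spectrum.mem_iff, ← isUnit_transpose, transpose_sub, transpose_map,
      transpose_transpose, Algebra.algebraMap_eq_smul_one, transpose_smul, transpose_one]
  simp only [specRad, spectralRadius, this]

theorem sum_mul_add_transpose_mulVec_sub {y : Fin n → ℝ} (hy : S *ᵥ y = y) (η : ℝ)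
    (v : Fin n → ℝ) : ∑ i, y i * (η + (Sᵀ *ᵥ v) i - v i) = η * ∑ i, y i := by
  have h := dotProduct_mulVec y Sᵀ v
  rw [vecMul_transpose, hy] at h
  simp only [dotProduct] at h
  simp only [mul_sub, mul_add, Finset.sum_sub_distrib, Finset.sum_add_distrib, h,
    ← Finset.sum_mul]
  ring

end Matrix

theorem le_mul_of_sum_mul_eq {ι : Type*} [Fintype ι] {y d : ι → ℝ} {η K : ℝ}
    (hy : ∀ i, 0 < y i) (hsum : ∑ i, y i * d i = η * ∑ i, y i) (hd : ∀ i j, d i ≤ K * d j)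
    (j : ι) : η ≤ K * d j ∧ d j ≤ K * η := by
  have hY : 0 < ∑ i, y i := Finset.sum_pos (fun i _ => hy i) ⟨j, Finset.mem_univ j⟩
  constructor
  · refine le_of_mul_le_mul_right ?_ hY
    calc η * ∑ i, y i = ∑ i, y i * d i := hsum.symm
      _ ≤ ∑ i, y i * (K * d j) := by gcongr with i; exacts [(hy i).le, hd i j]
      _ = K * d j * ∑ i, y i := by rw [Finset.mul_sum]; simp only [mul_comm]
  · refine le_of_mul_le_mul_right ?_ hY
    calc d j * ∑ i, y i = ∑ i, y i * d j := by rw [Finset.mul_sum]; simp only [mul_comm]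
      _ ≤ ∑ i, y i * (K * d i) := by gcongr with i; exacts [(hy i).le, hd j i]
      _ = K * η * ∑ i, y i := by simp only [mul_left_comm _ K, ← Finset.mul_sum, hsum]; ring

section Cubic

variable {σ e a c C : ℝ}

theorem div_le_of_le_mul_sq_add (hσ : 0 ≤ σ) (he : 0 < e) (ha : 0 ≤ a) (hc : c ≤ 1)
    (h : c * e ^ 3 ≤ a * (a ^ 2 + σ)) : c * e ^ 3 / (σ + e ^ 2) ≤ a := by
  rw [div_le_iff₀ (by positivity)]
  rcases le_total e a with hea | hae
  · calc c * e ^ 3 ≤ e * e ^ 2 := by nlinarith [pow_pos he 3]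
      _ ≤ a * (σ + e ^ 2) := by nlinarith
  · calc c * e ^ 3 ≤ a * (a ^ 2 + σ) := h
      _ ≤ a * (σ + e ^ 2) := by nlinarith [pow_le_pow_left₀ ha hae 2]

theorem le_div_of_mul_sq_add_le (hσ : 0 ≤ σ) (he : 0 < e) (ha : 0 ≤ a) (hC : 1 ≤ C)
    (h : a * (a ^ 2 + σ) ≤ C * e ^ 3) : a ≤ 2 * C * e ^ 3 / (σ + e ^ 2) := by
  have hae : a ≤ C * e := by
    refine le_of_pow_le_pow_left₀ three_ne_zero (by positivity) ?_
    calc a ^ 3 ≤ a * (a ^ 2 + σ) := by nlinarith [mul_nonneg ha hσ]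
      _ ≤ C * e ^ 3 := h
      _ ≤ C ^ 3 * e ^ 3 := by gcongr; exact le_self_pow₀ hC three_ne_zero
      _ = (C * e) ^ 3 := by ring
  rw [le_div_iff₀ (by positivity)]
  nlinarith [pow_pos he 2, mul_nonneg ha hσ, pow_nonneg ha 3]

end Cubic

/-- For a solution, `dysonGap τ (η + (Sᵀ *ᵥ v₁) i) (η + (S *ᵥ v₂) i)` is
`η + (Sᵀ *ᵥ v₁) i - v₁ i`, by `IsDysonSolution.eq_div`. -/
noncomputable def dysonGap (τ a b : ℝ) : ℝ := a - a / (a * b + τ)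

section DysonGap

variable {τ a b a' b' t K η D : ℝ}

theorem dysonGap_eq_mul (τ a b : ℝ) : dysonGap τ a b = a * (1 - 1 / (a * b + τ)) := by
  unfold dysonGap; ring

theorem dysonGap_swap_mul (τ a b : ℝ) : dysonGap τ b a * a = dysonGap τ a b * b := by
  unfold dysonGap; rw [mul_comm b a]; ring

theorem dysonGap_mono (hτ : 1 ≤ τ) (ha : 0 ≤ a) (hb : 0 ≤ b) (haa : a ≤ a') (hbb : b ≤ b') :
    dysonGap τ a b ≤ dysonGap τ a' b' := by
  have hW : 1 ≤ a * b + τ := by nlinarith [mul_nonneg ha hb]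
  rw [dysonGap_eq_mul, dysonGap_eq_mul]
  refine mul_le_mul haa ?_ (sub_nonneg.mpr ((div_le_one (by linarith)).mpr hW)) (ha.trans haa)
  gcongr
  exact ha.trans haa

theorem dysonGap_smul_le (hτ : 1 ≤ τ) (ht : 1 ≤ t) (ha : 0 ≤ a) (hb : 0 ≤ b) :
    dysonGap τ (t * a) (t * b) ≤ t ^ 3 * dysonGap τ a b := by
  have hW := mul_nonneg ha hb
  rw [dysonGap_eq_mul, dysonGap_eq_mul, show t * a * (t * b) = t ^ 2 * (a * b) by ring,
    show t ^ 3 * (a * (1 - 1 / (a * b + τ))) = t * a * (t ^ 2 * (1 - 1 / (a * b + τ))) by ring]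
  refine mul_le_mul_of_nonneg_left ?_ (by positivity)
  rw [one_sub_div (by nlinarith), one_sub_div (by nlinarith), mul_div_assoc',
    div_le_div_iff₀ (by nlinarith) (by nlinarith)]
  have ht2 : 1 ≤ t ^ 2 := one_le_pow₀ ht
  nlinarith [mul_nonneg (sub_nonneg.mpr ht2) hW, mul_nonneg (mul_nonneg (sub_nonneg.mpr ht2) hW) hW,
    mul_nonneg (sub_nonneg.mpr ht2) (sub_nonneg.mpr hτ)]

theorem dysonGap_le_pow_three_mul (hτ : 1 ≤ τ) (ht : 1 ≤ t) (ha : 0 ≤ a) (hb : 0 ≤ b)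
    (ha' : 0 ≤ a') (hb' : 0 ≤ b') (haa : a ≤ t * a') (hbb : b ≤ t * b') :
    dysonGap τ a b ≤ t ^ 3 * dysonGap τ a' b' :=
  (dysonGap_mono hτ ha hb haa hbb).trans (dysonGap_smul_le hτ ht ha' hb')

theorem le_two_mul_dysonGap (ha : 0 ≤ a) (h : 2 ≤ a * b + τ) : a ≤ 2 * dysonGap τ a b := by
  have : a / (a * b + τ) ≤ a / 2 := div_le_div_of_nonneg_left ha two_pos h
  unfold dysonGap; linarith

theorem mul_le_of_dysonGap_le (hK : 1 ≤ K) (hτ : 1 ≤ τ) (hη : η ≤ 1) (ha : 0 ≤ a) (hb : 0 ≤ b)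
    (hab : dysonGap τ a b ≤ K * η) (hba : dysonGap τ b a ≤ K * η) : a * b ≤ 4 * K ^ 2 := by
  by_cases hW : a * b ≤ 1
  · nlinarith
  have ha' : a ≤ 2 * K := by
    nlinarith [le_two_mul_dysonGap (τ := τ) (b := b) ha (by linarith)]
  have hb' : b ≤ 2 * K := by
    nlinarith [le_two_mul_dysonGap (τ := τ) (b := a) hb (by linarith [mul_comm a b])]
  nlinarith [mul_le_mul ha' hb' hb (by linarith)]

theorem le_sq_mul_of_dysonGap (hK : 0 ≤ K) (ha : 0 ≤ a) (hη : 0 < η)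
    (hab : η ≤ K * dysonGap τ a b) (hba : dysonGap τ b a ≤ K * η) : b ≤ K ^ 2 * a := by
  have hg : 0 < dysonGap τ a b := pos_of_mul_pos_right (hη.trans_le hab) hK
  refine le_of_mul_le_mul_right ?_ hg
  calc b * dysonGap τ a b = a * dysonGap τ b a := by rw [mul_comm, ← dysonGap_swap_mul, mul_comm]
    _ ≤ a * (K * η) := mul_le_mul_of_nonneg_left hba ha
    _ ≤ a * (K * (K * dysonGap τ a b)) := by gcongr
    _ = K ^ 2 * a * dysonGap τ a b := by ring

theorem mul_sq_add_window (hK : 1 ≤ K) (hτ : 1 ≤ τ) (ha : 0 ≤ a) (hb : 0 ≤ b)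
    (hab : a ≤ K ^ 2 * b) (hba : b ≤ K ^ 2 * a) (hD : a * b + τ ≤ D)
    (hlo : η ≤ K * dysonGap τ a b) (hhi : dysonGap τ a b ≤ K * η) :
    η ≤ K ^ 3 * (a * (a ^ 2 + (τ - 1))) ∧ a * (a ^ 2 + (τ - 1)) ≤ K ^ 3 * D * η := by
  have hW : 1 ≤ a * b + τ := by nlinarith [mul_nonneg ha hb]
  have hgap : a * (a * b + (τ - 1)) = dysonGap τ a b * (a * b + τ) := by
    unfold dysonGap; field_simp; ring
  have hg : 0 ≤ dysonGap τ a b := by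
    rw [dysonGap_eq_mul]
    exact mul_nonneg ha (sub_nonneg.mpr ((div_le_one (by linarith)).mpr hW))
  have hσ : 0 ≤ τ - 1 := by linarith
  have hK2 : 1 ≤ K ^ 2 := one_le_pow₀ hK
  constructor
  · calc η ≤ K * dysonGap τ a b := hlo
      _ ≤ K * (a * (a * b + (τ - 1))) := by rw [hgap]; gcongr; exact le_mul_of_one_le_right hg hW
      _ ≤ K * (K ^ 2 * (a * (a ^ 2 + (τ - 1)))) := by
          refine mul_le_mul_of_nonneg_left ?_ (by linarith)
          nlinarith [mul_le_mul_of_nonneg_left hba ha, mul_nonneg ha hσ]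
      _ = K ^ 3 * (a * (a ^ 2 + (τ - 1))) := by ring
  · calc a * (a ^ 2 + (τ - 1)) ≤ K ^ 2 * (a * (a * b + (τ - 1))) := by
          nlinarith [mul_le_mul_of_nonneg_left hab (mul_nonneg ha ha), mul_nonneg ha hσ]
      _ = K ^ 2 * (dysonGap τ a b * (a * b + τ)) := by rw [hgap]
      _ ≤ K ^ 2 * (K * η * D) := by gcongr; linarith
      _ = K ^ 3 * D * η := by ring

theorem bounds_of_dysonGap_window {τsup : ℝ} (hK : 1 ≤ K) (hτ : τ ∈ Set.Icc 1 τsup)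
    (hη₀ : 0 < η) (hη₁ : η ≤ 1) (ha : 0 < a) (hb : 0 < b)
    (hab : η ≤ K * dysonGap τ a b ∧ dysonGap τ a b ≤ K * η)
    (hba : η ≤ K * dysonGap τ b a ∧ dysonGap τ b a ≤ K * η) :
    (K ^ 3 * (4 * K ^ 2 + τsup))⁻¹ * η / (τ - 1 + η ^ ((2:ℝ) / 3)) ≤ a / (a * b + τ) ∧
      a / (a * b + τ) ≤ 2 * K ^ 3 * (4 * K ^ 2 + τsup) * η / (τ - 1 + η ^ ((2:ℝ) / 3)) := by
  obtain ⟨hτ₁, hτsup⟩ := hτ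
  set D := 4 * K ^ 2 + τsup
  have hD : a * b + τ ≤ D := by
    linarith [mul_le_of_dysonGap_le hK hτ₁ hη₁ ha.le hb.le hab.2 hba.2]
  have hW₁ : 1 ≤ a * b + τ := by nlinarith [mul_pos ha hb]
  obtain ⟨hlo, hhi⟩ := mul_sq_add_window hK hτ₁ ha.le hb.le
    (le_sq_mul_of_dysonGap (by linarith) hb.le hη₀ hba.1 hab.2)
    (le_sq_mul_of_dysonGap (by linarith) ha.le hη₀ hab.1 hba.2) hD hab.1 hab.2
  obtain ⟨e, he, rfl⟩ : ∃ e, 0 < e ∧ η = e ^ 3 := ⟨η ^ ((1:ℝ) / 3), by positivity, by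
    rw [← Real.rpow_natCast, ← Real.rpow_mul hη₀.le]; norm_num⟩
  have he2 : (e ^ 3) ^ ((2:ℝ) / 3) = e ^ 2 := by
    rw [← Real.rpow_natCast, ← Real.rpow_mul he.le, ← Real.rpow_natCast]; norm_num
  rw [he2]
  have hσ : 0 ≤ τ - 1 := by linarith
  have hK3 : 1 ≤ K ^ 3 := one_le_pow₀ hK
  have hD₀ : 0 < D := by linarith
  constructor
  · have ha_lo := div_le_of_le_mul_sq_add hσ he ha.le (inv_le_one_of_one_le₀ hK3)
      (by rw [inv_mul_le_iff₀ (by positivity)]; exact hlo)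
    calc (K ^ 3 * D)⁻¹ * e ^ 3 / (τ - 1 + e ^ 2)
        = (K ^ 3)⁻¹ * e ^ 3 / (τ - 1 + e ^ 2) / D := by rw [mul_inv]; ring
      _ ≤ a / D := by gcongr
      _ ≤ a / (a * b + τ) := div_le_div_of_nonneg_left ha.le (by linarith) hD
  · calc a / (a * b + τ) ≤ a := div_le_self ha.le hW₁
      _ ≤ 2 * (K ^ 3 * D) * e ^ 3 / (τ - 1 + e ^ 2) :=
          le_div_of_mul_sq_add_le hσ he ha.le (by nlinarith) hhi
      _ = 2 * K ^ 3 * D * e ^ 3 / (τ - 1 + e ^ 2) := by ring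

end DysonGap

namespace IsDysonSolution

variable {n : ℕ} {S : Matrix (Fin n) (Fin n) ℝ} {τ η κ : ℝ} {v₁ v₂ : Fin n → ℝ}

theorem transpose (h : IsDysonSolution S τ η v₁ v₂) : IsDysonSolution Sᵀ τ η v₂ v₁ := by
  obtain ⟨h₁, h₂, e₁, e₂⟩ := h
  exact ⟨h₂, h₁, by simpa only [transpose_transpose] using e₂,
    by simpa only [transpose_transpose] using e₁⟩

theorem eq_div (h : IsDysonSolution S τ η v₁ v₂) (hS : ∀ i j, 0 ≤ S i j) (hη : 0 < η)
    (hτ : 0 ≤ τ) (i : Fin n) :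
    v₁ i = (η + (Sᵀ *ᵥ v₁) i) / ((η + (Sᵀ *ᵥ v₁) i) * (η + (S *ᵥ v₂) i) + τ) := by
  have hw₁ := add_mulVec_pos (S := Sᵀ) hη (fun i j => hS j i) (fun j => (h.1 j).le) i
  have hw₂ := add_mulVec_pos hη hS (fun j => (h.2.1 j).le) i
  have e := h.2.2.1 i
  have hv := (h.1 i).ne'
  rw [eq_div_iff (by positivity)]
  field_simp at e
  linarith

theorem dysonGap_window (h : IsDysonSolution S τ η v₁ v₂) (hS : ∀ i j, 0 < S i j)
    (hκ : 1 ≤ κ) (hSκ : ∀ i j k l, S i j ≤ κ * S k l) (hρ : specRad S = 1) (hτ : 1 ≤ τ)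
    (hη : 0 < η) (i : Fin n) :
    η ≤ κ ^ 3 * dysonGap τ (η + (Sᵀ *ᵥ v₁) i) (η + (S *ᵥ v₂) i) ∧
      dysonGap τ (η + (Sᵀ *ᵥ v₁) i) (η + (S *ᵥ v₂) i) ≤ κ ^ 3 * η := by
  have : Nonempty (Fin n) := ⟨i⟩
  obtain ⟨y, hy, hSy⟩ := exists_pos_mulVec_eq_self hS hρ
  have hS0 : ∀ i j, 0 ≤ S i j := fun i j => (hS i j).le
  have hw₁ := add_mulVec_pos (S := Sᵀ) hη (fun i j => hS0 j i) (fun j => (h.1 j).le)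
  have hw₂ := add_mulVec_pos hη hS0 (fun j => (h.2.1 j).le)
  have hgap (j : Fin n) :
      η + (Sᵀ *ᵥ v₁) j - v₁ j = dysonGap τ (η + (Sᵀ *ᵥ v₁) j) (η + (S *ᵥ v₂) j) := by
    rw [dysonGap, ← h.eq_div hS0 hη (by linarith) j]
  have hcomp₁ (j k : Fin n) : η + (Sᵀ *ᵥ v₁) j ≤ κ * (η + (Sᵀ *ᵥ v₁) k) := by
    nlinarith [mulVec_le_mul_mulVec (S := Sᵀ) (fun i j k => hSκ k i k j) (fun j => (h.1 j).le) j k]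
  have hcomp₂ (j k : Fin n) : η + (S *ᵥ v₂) j ≤ κ * (η + (S *ᵥ v₂) k) := by
    nlinarith [mulVec_le_mul_mulVec (fun i j k => hSκ i k j k) (fun j => (h.2.1 j).le) j k]
  refine le_mul_of_sum_mul_eq (d := fun j => dysonGap τ (η + (Sᵀ *ᵥ v₁) j) (η + (S *ᵥ v₂) j))
    hy ?_ (fun j k => ?_) i
  · simpa only [hgap] using sum_mul_add_transpose_mulVec_sub hSy η v₁
  · exact dysonGap_le_pow_three_mul hτ hκ (hw₁ j).le (hw₂ j).le (hw₁ k).le (hw₂ k).le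
      (hcomp₁ j k) (hcomp₂ j k)

theorem fst_bounds {τsup : ℝ} (h : IsDysonSolution S τ η v₁ v₂) (hS : ∀ i j, 0 < S i j)
    (hκ : 1 ≤ κ) (hSκ : ∀ i j k l, S i j ≤ κ * S k l) (hρ : specRad S = 1)
    (hτ : τ ∈ Set.Icc 1 τsup) (hη₀ : 0 < η) (hη₁ : η ≤ 1) (i : Fin n) :
    ((κ ^ 3) ^ 3 * (4 * (κ ^ 3) ^ 2 + τsup))⁻¹ * η / (τ - 1 + η ^ ((2:ℝ) / 3)) ≤ v₁ i ∧
      v₁ i ≤ 2 * (κ ^ 3) ^ 3 * (4 * (κ ^ 3) ^ 2 + τsup) * η / (τ - 1 + η ^ ((2:ℝ) / 3)) := by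
  have hS0 : ∀ i j, 0 ≤ S i j := fun i j => (hS i j).le
  have hgap₁ := h.dysonGap_window hS hκ hSκ hρ hτ.1 hη₀ i
  have hgap₂ := h.transpose.dysonGap_window (fun i j => hS j i) hκ (fun i j k l => hSκ j i l k)
    (by rwa [specRad_transpose]) hτ.1 hη₀ i
  rw [transpose_transpose] at hgap₂
  rw [h.eq_div hS0 hη₀ (by linarith [hτ.1]) i]
  exact bounds_of_dysonGap_window (one_le_pow₀ hκ) hτ hη₀ hη₁
    (add_mulVec_pos (S := Sᵀ) hη₀ (fun i j => hS0 j i) (fun j => (h.1 j).le) i)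
    (add_mulVec_pos hη₀ hS0 (fun j => (h.2.1 j).le) i) hgap₁ hgap₂

end IsDysonSolution

/-- **Outside regime behaviour of the Dyson solution:** if `ρ(S) = 1` and
`τ⁺ > 1`, then uniformly for `η ∈ (0,1]` and `τ ∈ [1, τ⁺]` the positive
solution satisfies `v_a ∼ η/(τ - 1 + η^{2/3})`, with constants depending only
on `s⁎`, `s⁺` and `τ⁺`. -/
theorem dyson_solution_outside_regime
    (sl su τsup : ℝ) (hsl : 0 < sl) (hslsu : sl ≤ su) (hτsup : 1 < τsup) :
    ∃ c > (0:ℝ), ∃ C > (0:ℝ),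
      ∀ (n : ℕ), 1 ≤ n → ∀ S : Matrix (Fin n) (Fin n) ℝ,
        (∀ i j, sl / n ≤ S i j ∧ S i j ≤ su / n) → specRad S = 1 →
        ∀ η : ℝ, 0 < η → η ≤ 1 → ∀ τ : ℝ, τ ∈ Set.Icc (1:ℝ) τsup →
          ∀ v₁ v₂ : Fin n → ℝ, IsDysonSolution S τ η v₁ v₂ →
            ∀ i,
              (c * η / (τ - 1 + η ^ ((2:ℝ)/3)) ≤ v₁ i ∧
                v₁ i ≤ C * η / (τ - 1 + η ^ ((2:ℝ)/3))) ∧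
              (c * η / (τ - 1 + η ^ ((2:ℝ)/3)) ≤ v₂ i ∧
                v₂ i ≤ C * η / (τ - 1 + η ^ ((2:ℝ)/3))) := by
  have hκ : 1 ≤ su / sl := (one_le_div hsl).mpr hslsu
  set K := (su / sl) ^ 3
  have hK : 1 ≤ K := one_le_pow₀ hκ
  refine ⟨(K ^ 3 * (4 * K ^ 2 + τsup))⁻¹, by positivity, 2 * K ^ 3 * (4 * K ^ 2 + τsup),
    by positivity, ?_⟩
  intro n hn S hS hρ η hη₀ hη₁ τ hτ v₁ v₂ h i
  have hn₀ : (0 : ℝ) < n := Nat.cast_pos.mpr hn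
  have hpos : ∀ i j, 0 < S i j := fun i j => (div_pos hsl hn₀).trans_le (hS i j).1
  have hcomp : ∀ i j k l, S i j ≤ su / sl * S k l := fun i j k l =>
    calc S i j ≤ su / n := (hS i j).2
      _ = su / sl * (sl / n) := by field_simp
      _ ≤ su / sl * S k l := by gcongr; exact (hS k l).1
  exact ⟨h.fst_bounds hpos hκ hcomp hρ hτ hη₀ hη₁ i,
    h.transpose.fst_bounds (fun i j => hpos j i) hκ (fun i j k l => hcomp j i l k)
      (by rwa [specRad_transpose]) hτ hη₀ hη₁ i⟩
end

section
/- Spectral properties of T: for every τ ≥ 0 and η > 0, the symmetric matrix T satisfies ‖T‖₂ = 1 and ‖T‖_{ℓ^∞→ℓ^∞} = 1; its spectrum is spec(T) = {−1} ∪ { τ u_i − (v₁v₂)_i/u_i : i = 1,…,n }; if τ = 0 then T = −Id, and if τ > 0 then the eigenspace of T for the eigenvalue −1 equals { (y, −y) : y ∈ ℂ^n }. Moreover, assuming ρ(S) = 1 and given τ_* ∈ (0,1), there exists ε > 0 depending only on s_*, s^*, τ_* such that spec(T) ⊂ [−1, 1−ε] uniformly for all τ ∈ [0, 1−τ_*]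 and η ∈ (0,1]. -/
open Matrix

/-- The auxiliary vector `u = v₁/(η + Sᵗ v₁)`. -/
noncomputable def uvec {n : ℕ} (S : Matrix (Fin n) (Fin n) ℝ) (η : ℝ)
    (v₁ : Fin n → ℝ) : Fin n → ℝ :=
  fun i => v₁ i / (η + S.transpose.mulVec v₁ i)

/-- The matrix `T`, acting on `y = (y₁, y₂)` by
`T y = ((−v₁v₂ y₁ + τu² y₂)/u, (τu² y₁ − v₁v₂ y₂)/u)`. -/
noncomputable def TM {n : ℕ} (τ : ℝ) (v₁ v₂ u : Fin n → ℝ) :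
    Matrix (Fin n ⊕ Fin n) (Fin n ⊕ Fin n) ℝ :=
  Matrix.fromBlocks
    (Matrix.diagonal fun i => -(v₁ i * v₂ i) / u i)
    (Matrix.diagonal fun i => τ * (u i) ^ 2 / u i)
    (Matrix.diagonal fun i => τ * (u i) ^ 2 / u i)
    (Matrix.diagonal fun i => -(v₁ i * v₂ i) / u i)

/-- The ℓ² → ℓ² operator norm of a real matrix. -/
noncomputable def opNorm2 {m : Type*} [Fintype m] [DecidableEq m]
    (A : Matrix m m ℝ) : ℝ :=
  ‖LinearMap.toContinuousLinearMap (Matrix.toEuclideanLin A)‖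

/-- The ℓ^∞ → ℓ^∞ operator norm of a real matrix (with respect to the sup
norm on vectors). -/
noncomputable def opNormInf {m : Type*} [Fintype m] (A : Matrix m m ℝ) : ℝ :=
  sSup {r : ℝ | ∃ x : m → ℝ, ‖x‖ ≤ 1 ∧ r = ‖A.mulVec x‖}

/-! On a Dyson solution write `P = η + Sᵀv₁` and `Q = η + Sv₂`. The two equations solve to
`v₁ = P/(PQ + τ)` and `v₂ = Q/(PQ + τ)`, so `u = 1/(PQ + τ)`, and `a := v₁v₂/u = PQ/(PQ + τ)`
satisfies `0 < a ≤ 1` and `τu = 1 - a`. Hence `T = [[-a, 1 - a], [1 - a, -a]]` blockwise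
diagonal: it is `-1` on the vectors `(y, -y)` and `1 - 2a` on the vectors `(y, y)`, which gives
the norms, the spectrum and the `-1`-eigenspace.

For the gap, `ρ(S) = 1` forces `v₂ ≤ Sv₂` at some index `i₀`, since otherwise `S` would have
`ℓ^∞`-norm `< 1` after conjugation by `diag v₂`. There `PQ + τ = Q/v₂ > 1`, so
`a_{i₀} = 1 - τ/(PQ + τ) ≥ 1 - τ ≥ τ⁎`. The entry bounds make `P` and `Q` comparable across
indices up to the factor `s⁺/s⁎`, and `t ↦ t/(t + τ)` spreads this to `a ≥ τ⁎ (s⁎/s⁺)²`.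
-/

lemma abs_neg_mul_add_one_sub_mul_le {a p q M : ℝ} (ha₀ : 0 ≤ a) (ha₁ : a ≤ 1)
    (hp : |p| ≤ M) (hq : |q| ≤ M) : |-a * p + (1 - a) * q| ≤ M :=
  calc |-a * p + (1 - a) * q| ≤ a * |p| + (1 - a) * |q| := by
        refine (abs_add_le _ _).trans_eq ?_
        rw [abs_mul, abs_mul, abs_neg, abs_of_nonneg ha₀, abs_of_nonneg (sub_nonneg.2 ha₁)]
    _ ≤ a * M + (1 - a) * M := by gcongr
    _ = M := by ring

lemma norm_elim_one_neg_one {ι : Type*} [Fintype ι] [Nonempty ι] :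
    ‖(Sum.elim 1 (-1) : ι ⊕ ι → ℝ)‖ = 1 := by
  refine le_antisymm ((pi_norm_le_iff_of_nonneg zero_le_one).2 fun k => ?_) ?_
  · rcases k with i | i <;> simp
  · simpa using norm_le_pi_norm (Sum.elim 1 (-1) : ι ⊕ ι → ℝ) (.inl (Classical.arbitrary ι))

lemma eq_div_of_one_div_eq_add_div {x p q τ : ℝ} (hp : p ≠ 0) (hx : 1 / x = q + τ / p) :
    x = p / (p * q + τ) := by
  rw [← one_div_one_div x, hx]
  field_simp

lemma mul_div_add_le_div_add {r x y τ : ℝ} (hr : r ≤ 1) (hτ : 0 ≤ τ) (hx : 0 < x) (hy : 0 < y)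
    (h : r * y ≤ x) : r * (y / (y + τ)) ≤ x / (x + τ) := by
  rw [← mul_div_assoc, div_le_div_iff₀ (by positivity) (by positivity)]
  nlinarith [mul_le_mul_of_nonneg_right h hτ, mul_le_mul_of_nonneg_right hr (mul_pos hx hy).le]

section blockT

variable {ι α : Type*} [DecidableEq ι]

def blockT [Ring α] (a : ι → α) : Matrix (ι ⊕ ι) (ι ⊕ ι) α :=
  fromBlocks (diagonal (-a)) (diagonal (1 - a)) (diagonal (1 - a)) (diagonal (-a))

lemma blockT_map [CommRing α] {β : Type*} [CommRing β] (f : α →+* β) (a : ι → α) :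
    (blockT a).map f = blockT (f ∘ a) := by
  simp [blockT, fromBlocks_map, diagonal_map]

lemma blockT_one [CommRing α] : blockT (1 : ι → α) = -1 := by
  ext (i | i) (j | j) <;> by_cases h : i = j <;> simp [blockT, one_apply, h]

def hadamardBlock (α : Type*) [Ring α] : Matrix (ι ⊕ ι) (ι ⊕ ι) α := fromBlocks 1 1 1 (-1)

variable [Fintype ι]

lemma hadamardBlock_mul_self [Field α] [NeZero (2 : α)] :
    hadamardBlock (ι := ι) α * ((2⁻¹ : α) • hadamardBlock α) = 1 := by
  rw [mul_smul_comm, hadamardBlock, fromBlocks_multiply, fromBlocks_smul, ← fromBlocks_one]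
  have h2 : (2⁻¹ : α) * 2 = 1 := inv_mul_cancel₀ two_ne_zero
  congr 1 <;> simp [← two_smul α (1 : Matrix ι ι α), smul_smul, h2]

lemma blockT_eq_conj [Field α] [NeZero (2 : α)] (a : ι → α) :
    blockT a = hadamardBlock α * diagonal (Sum.elim (fun i => 1 - 2 * a i) fun _ => -1) *
      ((2⁻¹ : α) • hadamardBlock α) := by
  rw [hadamardBlock, ← fromBlocks_diagonal, mul_smul_comm, fromBlocks_multiply,
    fromBlocks_multiply, fromBlocks_smul, blockT]
  have h2 : (2 : α) ≠ 0 := two_ne_zero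
  congr 1 <;> ext i j <;> by_cases h : i = j <;> simp [h, one_apply] <;> field_simp <;> ring

lemma spectrum_blockT [Field α] [NeZero (2 : α)] [Nonempty ι] (a : ι → α) :
    spectrum α (blockT a) = {-1} ∪ Set.range fun i => 1 - 2 * a i := by
  have hX := hadamardBlock_mul_self (ι := ι) (α := α)
  let X : (Matrix (ι ⊕ ι) (ι ⊕ ι) α)ˣ :=
    ⟨hadamardBlock α, (2⁻¹ : α) • hadamardBlock α, hX, by rwa [smul_mul_assoc, ← mul_smul_comm]⟩
  rw [blockT_eq_conj]
  refine (spectrum.units_conjugate (u := X)).trans ?_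
  rw [spectrum_diagonal, Set.Sum.elim_range, Set.range_const, Set.union_comm]

lemma blockT_mulVec [CommRing α] (a : ι → α) (x : ι ⊕ ι → α) :
    blockT a *ᵥ x = Sum.elim (fun i => -a i * x (.inl i) + (1 - a i) * x (.inr i))
      (fun i => (1 - a i) * x (.inl i) - a i * x (.inr i)) := by
  ext (i | i) <;> simp [blockT, fromBlocks_mulVec, mulVec_diagonal, sub_eq_add_neg]

lemma blockT_mulVec_elim_neg [CommRing α] (a y : ι → α) :
    blockT a *ᵥ Sum.elim y (-y) = -Sum.elim y (-y) := by
  ext (i | i) <;> simp [blockT_mulVec] <;> ring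

lemma blockT_mulVec_eq_neg_iff [CommRing α] [NoZeroDivisors α] {a : ι → α} (ha : ∀ i, a i ≠ 1)
    (x : ι ⊕ ι → α) : blockT a *ᵥ x = -x ↔ ∃ y, x = Sum.elim y (-y) := by
  refine ⟨fun hx => ⟨fun i => x (.inl i), ?_⟩, fun ⟨y, hy⟩ => hy ▸ blockT_mulVec_elim_neg a y⟩
  ext (i | i)
  · rfl
  have hxi := congrFun hx (.inl i)
  simp only [blockT_mulVec, Sum.elim_inl, Pi.neg_apply] at hxi
  have : (1 - a i) * (x (.inl i) + x (.inr i)) = 0 := by linear_combination hxi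
  have := (mul_eq_zero.mp this).resolve_left (sub_ne_zero.mpr (ha i).symm)
  simp only [Sum.elim_inr, Pi.neg_apply]
  linear_combination this

lemma opNormInf_blockT [Nonempty ι] {a : ι → ℝ} (ha : ∀ i, 0 ≤ a i ∧ a i ≤ 1) :
    opNormInf (blockT a) = 1 := by
  refine IsGreatest.csSup_eq ⟨⟨Sum.elim 1 (-1), norm_elim_one_neg_one.le, ?_⟩, ?_⟩
  · rw [blockT_mulVec_elim_neg, norm_neg, norm_elim_one_neg_one]
  rintro r ⟨x, hx, rfl⟩
  have hx : ∀ k, |x k| ≤ 1 := fun k => (norm_le_pi_norm x k).trans hx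
  refine (pi_norm_le_iff_of_nonneg zero_le_one).2 fun k => ?_
  simp only [blockT_mulVec, Real.norm_eq_abs]
  rcases k with i | i
  · exact abs_neg_mul_add_one_sub_mul_le (ha i).1 (ha i).2 (hx _) (hx _)
  · simpa [sub_eq_neg_add, add_comm] using
      abs_neg_mul_add_one_sub_mul_le (ha i).1 (ha i).2 (hx (.inr i)) (hx (.inl i))

lemma opNorm2_blockT [Nonempty ι] {a : ι → ℝ} (ha : ∀ i, 0 ≤ a i ∧ a i ≤ 1) :
    opNorm2 (blockT a) = 1 := by
  set f := LinearMap.toContinuousLinearMap (toEuclideanLin (blockT a))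
  have hf (x : EuclideanSpace ℝ (ι ⊕ ι)) : f x = WithLp.toLp 2 (blockT a *ᵥ x.ofLp) := rfl
  refine le_antisymm (f.opNorm_le_bound zero_le_one fun x => ?_) ?_
  · rw [one_mul, EuclideanSpace.norm_eq, EuclideanSpace.norm_eq]
    refine Real.sqrt_le_sqrt ?_
    simp only [Fintype.sum_sum_type, ← Finset.sum_add_distrib]
    refine Finset.sum_le_sum fun i _ => ?_
    simp only [hf, blockT_mulVec, PiLp.toLp_apply, Sum.elim_inl, Sum.elim_inr, Real.norm_eq_abs,
      sq_abs]
    -- the defect is `2a(1 - a)(p + q)²`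
    nlinarith [mul_nonneg (mul_nonneg (ha i).1 (sub_nonneg.2 (ha i).2))
      (sq_nonneg (x (.inl i) + x (.inr i)))]
  · show 1 ≤ ‖f‖
    set z : EuclideanSpace ℝ (ι ⊕ ι) := WithLp.toLp 2 (Sum.elim 1 (-1))
    have hz : f z = -z := by
      rw [hf, blockT_mulVec_elim_neg]
      rfl
    have hz0 : 0 < ‖z‖ := norm_pos_iff.2 fun h => by
      simpa [z] using congrArg (· (.inl (Classical.arbitrary ι))) h
    have := f.le_opNorm z
    rw [hz, norm_neg] at this
    exact le_of_mul_le_mul_right (by simpa using this) hz0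

end blockT

lemma mulVec_nonneg {m ι : Type*} [Fintype ι] {S : Matrix m ι ℝ} (hS : ∀ i j, 0 ≤ S i j)
    {w : ι → ℝ} (hw : ∀ j, 0 ≤ w j) (i : m) : 0 ≤ (S *ᵥ w) i :=
  Finset.sum_nonneg fun j _ => mul_nonneg (hS i j) (hw j)

lemma spectralRadius_le_of_mulVec_le {ι : Type*} [Fintype ι] [DecidableEq ι] [Nonempty ι]
    {S : Matrix ι ι ℝ} (hS : ∀ i j, 0 ≤ S i j) {w : ι → ℝ} (hw : ∀ i, 0 < w i) {c : NNReal}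
    (h : ∀ i, (S *ᵥ w) i ≤ c * w i) : spectralRadius ℂ (S.map (algebraMap ℝ ℂ)) ≤ c := by
  let := Matrix.linftyOpNormedRing (n := ι) (α := ℂ)
  let := Matrix.linftyOpNormedAlgebra (R := ℂ) (n := ι) (α := ℂ)
  have hw' (i : ι) : (w i : ℂ) ≠ 0 := Complex.ofReal_ne_zero.2 (hw i).ne'
  -- `diag w⁻¹ * S * diag w` has row sums `(S w)ᵢ / wᵢ`, so its `ℓ^∞` operator norm is `≤ c`
  let D : (Matrix ι ι ℂ)ˣ :=
    ⟨diagonal fun i => (w i : ℂ), diagonal fun i => (w i : ℂ)⁻¹, by simp [hw'], by simp [hw']⟩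
  rw [spectralRadius, ← spectrum.units_conjugate (u := D⁻¹)]
  refine (spectrum.spectralRadius_le_nnnorm (𝕜 := ℂ) _).trans ?_
  rw [linfty_opNNNorm_def, ENNReal.coe_le_coe]
  refine Finset.sup_le fun i _ => ?_
  rw [← NNReal.coe_le_coe, NNReal.coe_sum]
  calc _ = (w i)⁻¹ * (S *ᵥ w) i := by
        simp only [D, Units.inv_mk, Units.val_mk, diagonal_mul, mul_diagonal, mulVec, dotProduct,
          Finset.mul_sum]
        refine Finset.sum_congr rfl fun j _ => ?_
        rw [coe_nnnorm, map_apply, Complex.coe_algebraMap, ← Complex.ofReal_inv,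
          ← Complex.ofReal_mul, ← Complex.ofReal_mul, Complex.norm_real, Real.norm_of_nonneg
            (mul_nonneg (mul_nonneg (inv_nonneg.2 (hw i).le) (hS i j)) (hw j).le)]
        ring
    _ ≤ c := by
        rw [inv_mul_le_iff₀ (hw i), mul_comm]
        exact h i

lemma exists_le_mulVec_of_specRad_eq_one {n : ℕ} [Nonempty (Fin n)]
    {S : Matrix (Fin n) (Fin n) ℝ} (hS : ∀ i j, 0 ≤ S i j) (hρ : specRad S = 1)
    {w : Fin n → ℝ} (hw : ∀ i, 0 < w i) : ∃ i, w i ≤ (S *ᵥ w) i := by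
  by_contra! hlt
  obtain ⟨i₀, -, hi₀⟩ := Finset.exists_max_image Finset.univ (fun i => (S *ᵥ w) i / w i)
    Finset.univ_nonempty
  have hc₀ : 0 ≤ (S *ᵥ w) i₀ / w i₀ :=
    div_nonneg (mulVec_nonneg hS (fun j => (hw j).le) i₀) (hw i₀).le
  have hρc := spectralRadius_le_of_mulVec_le hS hw (c := ⟨_, hc₀⟩)
    fun i => (div_le_iff₀ (hw i)).1 (hi₀ i (Finset.mem_univ i))
  have : specRad S ≤ (S *ᵥ w) i₀ / w i₀ :=
    ENNReal.toReal_le_of_le_ofReal hc₀ (hρc.trans_eq (ENNReal.ofReal_eq_coe_nnreal hc₀).symm)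
  linarith [(div_lt_one (hw i₀)).2 (hlt i₀)]

lemma mul_entry_le_mul_entry {m ι : Type*} {S : Matrix m ι ℝ} {lo hi c : ℝ} (hlo : 0 ≤ lo)
    (hhi : 0 ≤ hi) (hS : ∀ i j, lo / c ≤ S i j ∧ S i j ≤ hi / c) (i : m) (j : ι) (k : m) (l : ι) :
    lo * S k l ≤ hi * S i j :=
  calc lo * S k l ≤ lo * (hi / c) := mul_le_mul_of_nonneg_left (hS k l).2 hlo
    _ = hi * (lo / c) := by ring
    _ ≤ hi * S i j := mul_le_mul_of_nonneg_left (hS i j).1 hhi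

lemma mul_add_mulVec_le_mul_add_mulVec {ι : Type*} [Fintype ι] {S : Matrix ι ι ℝ} {lo hi η : ℝ}
    (hS : ∀ i j k l, lo * S k l ≤ hi * S i j) (hlohi : lo ≤ hi) (hη : 0 ≤ η) {w : ι → ℝ}
    (hw : ∀ i, 0 ≤ w i) (i k : ι) : lo * (η + (S *ᵥ w) k) ≤ hi * (η + (S *ᵥ w) i) := by
  simp only [mul_add, mulVec, dotProduct, Finset.mul_sum, ← mul_assoc]
  exact add_le_add (mul_le_mul_of_nonneg_right hlohi hη)
    (Finset.sum_le_sum fun j _ => mul_le_mul_of_nonneg_right (hS i j k j) (hw j))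

namespace IsDysonSolution

variable {n : ℕ} {S : Matrix (Fin n) (Fin n) ℝ} {τ η : ℝ} {v₁ v₂ : Fin n → ℝ}
  (h : IsDysonSolution S τ η v₁ v₂) (hS : ∀ i j, 0 ≤ S i j) (hη : 0 < η)
include h hS hη

lemma add_transpose_mulVec_pos (i : Fin n) : 0 < η + (Sᵀ *ᵥ v₁) i :=
  add_pos_of_pos_of_nonneg hη (mulVec_nonneg (fun i j => hS j i) (fun j => (h.1 j).le) i)

lemma add_mulVec_pos (i : Fin n) : 0 < η + (S *ᵥ v₂) i :=
  add_pos_of_pos_of_nonneg hη (mulVec_nonneg hS (fun j => (h.2.1 j).le) i)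

lemma v₂_eq (i : Fin n) : v₂ i = (η + (S *ᵥ v₂) i) /
    ((η + (Sᵀ *ᵥ v₁) i) * (η + (S *ᵥ v₂) i) + τ) := by
  rw [mul_comm]
  exact eq_div_of_one_div_eq_add_div (h.add_mulVec_pos hS hη i).ne' (h.2.2.2 i)

lemma uvec_eq (i : Fin n) : uvec S η v₁ i = 1 / ((η + (Sᵀ *ᵥ v₁) i) * (η + (S *ᵥ v₂) i) + τ) := by
  have hP := h.add_transpose_mulVec_pos hS hη i
  rw [uvec, eq_div_of_one_div_eq_add_div hP.ne' (h.2.2.1 i)]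
  field_simp

lemma uvec_pos (i : Fin n) : 0 < uvec S η v₁ i :=
  div_pos (h.1 i) (h.add_transpose_mulVec_pos hS hη i)

lemma denom_pos (i : Fin n) : 0 < (η + (Sᵀ *ᵥ v₁) i) * (η + (S *ᵥ v₂) i) + τ := by
  have hP := h.add_transpose_mulVec_pos hS hη i
  have hv : 0 < 1 / v₁ i := one_div_pos.2 (h.1 i)
  rw [h.2.2.1 i] at hv
  have hD : (η + (Sᵀ *ᵥ v₁) i) * (η + (S *ᵥ v₂) i) + τ =
      (η + (Sᵀ *ᵥ v₁) i) * (η + (S *ᵥ v₂) i + τ / (η + (Sᵀ *ᵥ v₁) i)) := by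
    field_simp
  exact hD ▸ mul_pos hP hv

lemma mul_div_uvec_eq (i : Fin n) : v₁ i * v₂ i / uvec S η v₁ i =
    (η + (Sᵀ *ᵥ v₁) i) * (η + (S *ᵥ v₂) i) /
      ((η + (Sᵀ *ᵥ v₁) i) * (η + (S *ᵥ v₂) i) + τ) := by
  have hP := h.add_transpose_mulVec_pos hS hη i
  have hD := h.denom_pos hS hη i
  rw [h.uvec_eq hS hη, eq_div_of_one_div_eq_add_div hP.ne' (h.2.2.1 i), h.v₂_eq hS hη]
  field_simp

lemma mul_div_uvec_add_mul_uvec (i : Fin n) :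
    v₁ i * v₂ i / uvec S η v₁ i + τ * uvec S η v₁ i = 1 := by
  have hD := h.denom_pos hS hη i
  rw [h.mul_div_uvec_eq hS hη, h.uvec_eq hS hη]
  field_simp

lemma mul_div_uvec_le_one (hτ : 0 ≤ τ) (i : Fin n) : v₁ i * v₂ i / uvec S η v₁ i ≤ 1 := by
  linarith [h.mul_div_uvec_add_mul_uvec hS hη i, mul_nonneg hτ (h.uvec_pos hS hη i).le]

lemma mul_div_uvec_lt_one (hτ : 0 < τ) (i : Fin n) : v₁ i * v₂ i / uvec S η v₁ i < 1 := by
  linarith [h.mul_div_uvec_add_mul_uvec hS hη i, mul_pos hτ (h.uvec_pos hS hη i)]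

lemma le_mul_div_uvec [Nonempty (Fin n)] {sl su τs : ℝ} (hsl : 0 < sl) (hslsu : sl ≤ su)
    (hratio : ∀ i j k l, sl * S k l ≤ su * S i j) (hρ : specRad S = 1) (hτ : 0 ≤ τ)
    (hτs : τ ≤ 1 - τs) (i : Fin n) : τs * (sl / su) ^ 2 ≤ v₁ i * v₂ i / uvec S η v₁ i := by
  set P := fun i => η + (Sᵀ *ᵥ v₁) i
  set Q := fun i => η + (S *ᵥ v₂) i
  have hP : ∀ i, 0 < P i := h.add_transpose_mulVec_pos hS hη
  have hQ : ∀ i, 0 < Q i := h.add_mulVec_pos hS hη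
  have hsu : 0 < su := hsl.trans_le hslsu
  obtain ⟨i₀, hi₀⟩ := exists_le_mulVec_of_specRad_eq_one hS hρ h.2.1
  have hD₀ : 1 < P i₀ * Q i₀ + τ := by
    have hD := h.denom_pos hS hη i₀
    have : Q i₀ / (P i₀ * Q i₀ + τ) < Q i₀ := by
      rw [← h.v₂_eq hS hη]
      linarith
    rwa [div_lt_iff₀ hD, lt_mul_iff_one_lt_right (hQ i₀)] at this
  have ha₀ : τs ≤ P i₀ * Q i₀ / (P i₀ * Q i₀ + τ) := by
    rw [le_div_iff₀ (by linarith)]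
    nlinarith [mul_le_mul_of_nonneg_left hD₀.le hτ]
  have hcmp (R : Fin n → ℝ) (hR : ∀ k, sl * R i₀ ≤ su * R k) : sl / su * R i₀ ≤ R i := by
    rw [div_mul_eq_mul_div, div_le_iff₀ hsu, mul_comm (R i)]
    exact hR i
  have hPQ : (sl / su) ^ 2 * (P i₀ * Q i₀) ≤ P i * Q i := by
    rw [sq, mul_mul_mul_comm]
    refine mul_le_mul (hcmp P fun k => ?_) (hcmp Q fun k => ?_)
      (mul_nonneg (div_nonneg hsl.le hsu.le) (hQ i₀).le) (hP i).le
    · exact mul_add_mulVec_le_mul_add_mulVec (fun i j k l => hratio j i l k) hslsu hη.le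
        (fun j => (h.1 j).le) k i₀
    · exact mul_add_mulVec_le_mul_add_mulVec hratio hslsu hη.le (fun j => (h.2.1 j).le) k i₀
  calc τs * (sl / su) ^ 2 ≤ (sl / su) ^ 2 * (P i₀ * Q i₀ / (P i₀ * Q i₀ + τ)) := by
        rw [mul_comm]
        gcongr
    _ ≤ P i * Q i / (P i * Q i + τ) :=
        mul_div_add_le_div_add (pow_le_one₀ (by positivity) ((div_le_one hsu).2 hslsu)) hτ
          (mul_pos (hP i) (hQ i)) (mul_pos (hP i₀) (hQ i₀)) hPQ
    _ = v₁ i * v₂ i / uvec S η v₁ i := (h.mul_div_uvec_eq hS hη i).symm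

end IsDysonSolution

lemma TM_eq_blockT {n : ℕ} {τ : ℝ} {v₁ v₂ u : Fin n → ℝ} (hu : ∀ i, u i ≠ 0)
    (h : ∀ i, v₁ i * v₂ i / u i + τ * u i = 1) :
    TM τ v₁ v₂ u = blockT fun i => v₁ i * v₂ i / u i := by
  have hd : (fun i => τ * u i ^ 2 / u i) = 1 - fun i => v₁ i * v₂ i / u i := funext fun i => by
    rw [sq, ← mul_assoc, mul_div_cancel_right₀ _ (hu i), Pi.sub_apply, Pi.one_apply]
    linarith [h i]
  simp only [TM, blockT, hd, neg_div]
  rfl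

/-- **Spectral properties of `T`:** `‖T‖₂ = ‖T‖_{∞→∞} = 1`; the spectrum of
`T` is `{−1} ∪ {τuᵢ − (v₁v₂)ᵢ/uᵢ}`; if `τ = 0` then `T = −Id`, and if `τ > 0`
the eigenspace of `T` for the eigenvalue `−1` is `{(y, −y) : y ∈ ℂⁿ}`;
moreover, for `τ ∈ [0, 1−τ⁎]` and `η ∈ (0,1]` the spectrum lies in
`[−1, 1−ε]` with `ε` depending only on `s⁎, s⁺, τ⁎`. -/
theorem spectral_properties_of_T
    (sl su τs : ℝ) (hsl : 0 < sl) (hslsu : sl ≤ su)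
    (hτs : 0 < τs) (hτs1 : τs < 1) :
    ∃ ε > (0:ℝ),
      ∀ (n : ℕ), 1 ≤ n → ∀ S : Matrix (Fin n) (Fin n) ℝ,
        (∀ i j, sl / n ≤ S i j ∧ S i j ≤ su / n) → specRad S = 1 →
        ∀ τ η : ℝ, 0 ≤ τ → 0 < η →
        ∀ v₁ v₂ : Fin n → ℝ, IsDysonSolution S τ η v₁ v₂ →
          -- (i) both operator norms are 1
          (opNorm2 (TM τ v₁ v₂ (uvec S η v₁)) = 1 ∧
            opNormInf (TM τ v₁ v₂ (uvec S η v₁)) = 1) ∧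
          -- (ii) the spectrum of `T`
          (spectrum ℝ (TM τ v₁ v₂ (uvec S η v₁)) =
            {-1} ∪ Set.range (fun i : Fin n =>
              τ * uvec S η v₁ i - v₁ i * v₂ i / uvec S η v₁ i)) ∧
          -- (iii) `T = −Id` for `τ = 0`, and the `−1`-eigenspace for `τ > 0`
          (τ = 0 → TM τ v₁ v₂ (uvec S η v₁) = -1) ∧
          (0 < τ →
            {x : Fin n ⊕ Fin n → ℂ |
                ((TM τ v₁ v₂ (uvec S η v₁)).map (Complex.ofReal)).mulVec x
                  = -x} =
              {x : Fin n ⊕ Fin n → ℂ |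
                ∃ y : Fin n → ℂ, x = Sum.elim y (-y)}) ∧
          -- (iv) the spectrum is away from 1 in the inside regime
          (τ ≤ 1 - τs → η ≤ 1 →
            spectrum ℝ (TM τ v₁ v₂ (uvec S η v₁)) ⊆
              Set.Icc (-1 : ℝ) (1 - ε)) := by
  have hsu : 0 < su := hsl.trans_le hslsu
  have hε : τs * (sl / su) ^ 2 < 1 := mul_lt_one_of_nonneg_of_lt_one_left hτs.le hτs1
    (pow_le_one₀ (by positivity) ((div_le_one hsu).2 hslsu))
  refine ⟨τs * (sl / su) ^ 2, by positivity, fun n hn S hS hρ τ η hτ hη v₁ v₂ hD => ?_⟩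
  have : Nonempty (Fin n) := ⟨⟨0, hn⟩⟩
  have hS₀ : ∀ i j, 0 ≤ S i j := fun i j => (by positivity : 0 ≤ sl / n).trans (hS i j).1
  set u := uvec S η v₁
  set a : Fin n → ℝ := fun i => v₁ i * v₂ i / u i
  have hu : ∀ i, 0 < u i := hD.uvec_pos hS₀ hη
  have hsum : ∀ i, a i + τ * u i = 1 := hD.mul_div_uvec_add_mul_uvec hS₀ hη
  have ha : ∀ i, 0 ≤ a i ∧ a i ≤ 1 := fun i =>
    ⟨div_nonneg (mul_pos (hD.1 i) (hD.2.1 i)).le (hu i).le, hD.mul_div_uvec_le_one hS₀ hη hτ i⟩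
  have hspec : (fun i => τ * u i - v₁ i * v₂ i / u i) = fun i => 1 - 2 * a i :=
    funext fun i => by linarith [hsum i]
  have hT : TM τ v₁ v₂ u = blockT a := TM_eq_blockT (fun i => (hu i).ne') hsum
  rw [hT, hspec, spectrum_blockT]
  refine ⟨⟨opNorm2_blockT ha, opNormInf_blockT ha⟩, rfl, fun hτ₀ => ?_, fun hτ₀ => ?_,
    fun hτs₁ _ => ?_⟩
  · rw [show a = 1 from funext fun i => by simpa [hτ₀] using hsum i, blockT_one]
  · have hmap : (blockT a).map Complex.ofReal = blockT fun i => (a i : ℂ) :=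
      blockT_map Complex.ofRealHom a
    rw [hmap]
    exact Set.ext <| blockT_mulVec_eq_neg_iff fun i => by
      exact_mod_cast (hD.mul_div_uvec_lt_one hS₀ hη hτ₀ i).ne
  · rintro μ (rfl | ⟨i, rfl⟩)
    · exact ⟨le_rfl, by linarith⟩
    · have := hD.le_mul_div_uvec hS₀ hη hsl hslsu
        (mul_entry_le_mul_entry hsl.le hsu.le hS) hρ hτ hτs₁ i
      constructor <;> linarith [ha i]
end
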